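/- If M is a proper length-factorial monoid, then the reduced monoid M_red has exactly one Betti element. -/

import Mathlib

open Multiset

namespace LF

variable (M : Type*) [CancelCommMonoid M]

/-- `s` is a factorization of the element `b` of the reduced monoid `M_red = Associates M`:
a multiset of atoms of `M_red` whose product is `b`. -/
def IsFactorizationOf (s : Multiset (Associates M)) (b : Associates M) : Prop :=
  (∀ a ∈ s, Irreducible a) ∧ s.prod = b

/-- The set of factorizations of `x : M`. -/
def FactorsOf (x : M) : Set (Multiset (Associates M)) :=
  {s | IsFactorizationOf M s (Associates.mk x)}

/-- `M` is atomic: every non-unit admits a factorization into atoms. -/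
def Atomic : Prop := ∀ x : M, ¬ IsUnit x → (FactorsOf M x).Nonempty

/-- `M` is length-factorial: factorizations of the same element with equal length coincide. -/
def LengthFactorial : Prop :=
  ∀ x : M, ∀ s ∈ FactorsOf M x, ∀ t ∈ FactorsOf M x, card s = card t → s = t

/-- `M` is a factorial (unique factorization) monoid: every element has exactly one
factorization. -/
def Factorial : Prop := ∀ x : M, ∃! s, s ∈ FactorsOf M x

/-- `(z₁, z₂)` is a factorization relation: two multisets of atoms with the same product. -/
def IsRel (z1 z2 : Multiset (Associates M)) : Prop :=
  (∀ a ∈ z1, Irreducible a) ∧ (∀ a ∈ z2, Irreducible a) ∧ z1.prod = z2.prod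

/-- A factorization relation is irredundant if the two sides share no atom. -/
def Irredundant (z1 z2 : Multiset (Associates M)) : Prop := ∀ a, a ∈ z1 → a ∉ z2

/-- Prime element of the reduced monoid. -/
def IsPrimeElem (p : Associates M) : Prop :=
  ¬ IsUnit p ∧ ∀ a b : Associates M, p ∣ a * b → p ∣ a ∨ p ∣ b

/-- A purely long atom: a non-prime atom which, whenever it appears in an irredundant
unbalanced factorization relation, appears in the longer side. -/
def PurelyLong (a : Associates M) : Prop :=
  Irreducible a ∧ ¬ IsPrimeElem M a ∧
    ∀ z1 z2, IsRel M z1 z2 → Irredundant M z1 z2 → card z1 ≠ card z2 →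
      a ∈ z1 → card z2 < card z1

/-- A purely short atom: a non-prime atom which, whenever it appears in an irredundant
unbalanced factorization relation, appears in the shorter side. -/
def PurelyShort (a : Associates M) : Prop :=
  Irreducible a ∧ ¬ IsPrimeElem M a ∧
    ∀ z1 z2, IsRel M z1 z2 → Irredundant M z1 z2 → card z1 ≠ card z2 →
      a ∈ z1 → card z1 < card z2

/-- Two factorizations `z, z'` of `b ∈ M_red` are linked by a chain of factorizations of `b`
in which consecutive factorizations have a common atom (i.e. nontrivial gcd in `Z(M)`). -/
def GcdChainRel (b : Associates M) (z z' : Multiset (Associates M)) : Prop :=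
  ∃ L : List (Multiset (Associates M)), L.head? = some z ∧ L.getLast? = some z' ∧
    (∀ w ∈ L, IsFactorizationOf M w b) ∧
    L.Chain' (fun u v => ∃ a, a ∈ u ∧ a ∈ v)

/-- `b` is a Betti element of `M_red`: its set of factorizations has at least two classes
under the chain relation `GcdChainRel`. -/
def IsBetti (b : Associates M) : Prop :=
  ∃ z z', IsFactorizationOf M z b ∧ IsFactorizationOf M z' b ∧ ¬ GcdChainRel M b z z'

/-!
Call an irredundant relation `u.prod = v.prod` between atoms with `card u < card v`
unbalanced. In a length-factorial monoid any two unbalanced relations `(u, v)`, `(u', v')` are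
proportional, `g' • (u, v) = g • (u', v')` with `g = card v - card u`, because
`g' • u + g • v'` and `g' • v + g • u'` are factorizations of one element of equal length.
Hence an unbalanced relation `(u, v)` of minimal total length is contained in every other one.
It follows that `u` and `v` are the only factorizations of `u.prod`, and they share no atom, so
`u.prod` is a Betti element. Conversely, two factorizations of a Betti element `b` that are not
chained form an unbalanced relation `(z, z')` containing `(u, v)`; if `z ≠ u`, then replacing
`u` by `v` inside `z` gives a factorization of `b` chaining `z` to `z'`. So `b = u.prod`.
-/

variable {M}

instance : IsLeftCancelMul (Associates M) where
  mul_left_cancel a b c h := by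
    obtain ⟨a, rfl⟩ := Associates.mk_surjective a
    obtain ⟨b, rfl⟩ := Associates.mk_surjective b
    obtain ⟨c, rfl⟩ := Associates.mk_surjective c
    simp only [Associates.mk_mul_mk, Associates.mk_eq_mk_iff_associated] at h ⊢
    obtain ⟨u, hu⟩ := h
    exact ⟨u, mul_left_cancel (by rwa [← mul_assoc])⟩

theorem eq_zero_of_prod_eq_one {s : Multiset (Associates M)} (hs : ∀ a ∈ s, Irreducible a)
    (h : s.prod = 1) : s = 0 :=
  Multiset.eq_zero_of_forall_notMem fun a ha =>
    (hs a ha).not_isUnit (isUnit_of_dvd_one (h ▸ Multiset.dvd_prod ha))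

theorem eq_of_le_of_prod_eq {s t : Multiset (Associates M)} (ht : ∀ a ∈ t, Irreducible a)
    (hst : s ≤ t) (h : s.prod = t.prod) : s = t := by
  obtain ⟨e, rfl⟩ := Multiset.le_iff_exists_add.1 hst
  rw [Multiset.prod_add, left_eq_mul] at h
  rw [eq_zero_of_prod_eq_one (fun a ha => ht a (Multiset.mem_add.2 (Or.inr ha))) h, add_zero]

theorem Atomic.factorsOf_nonempty (hat : Atomic M) (x : M) : (FactorsOf M x).Nonempty := by
  by_cases hx : IsUnit x
  · exact ⟨0, by simp, by rw [Multiset.prod_zero, Associates.mk_eq_one.2 hx]⟩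
  · exact hat x hx

theorem LengthFactorial.eq_of_isRel (hlf : LengthFactorial M) {s t : Multiset (Associates M)}
    (h : IsRel M s t) (hc : card s = card t) : s = t := by
  obtain ⟨x, hx⟩ := Associates.mk_surjective s.prod
  exact hlf x s ⟨h.1, hx.symm⟩ t ⟨h.2.1, by rw [hx, h.2.2]⟩ hc

theorem IsRel.symm {s t : Multiset (Associates M)} (h : IsRel M s t) : IsRel M t s :=
  ⟨h.2.1, h.1, h.2.2.symm⟩

theorem IsRel.sub_sub [DecidableEq (Associates M)] {s t : Multiset (Associates M)}
    (h : IsRel M s t) : IsRel M (s - t) (t - s) := by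
  refine ⟨fun a ha => h.1 a (Multiset.mem_of_le tsub_le_self ha),
    fun a ha => h.2.1 a (Multiset.mem_of_le tsub_le_self ha),
    mul_left_cancel (a := (s ∩ t).prod) ?_⟩
  rw [← Multiset.prod_add, ← Multiset.prod_add, add_comm, Multiset.sub_add_inter, add_comm,
    Multiset.inter_comm, Multiset.sub_add_inter, h.2.2]

theorem _root_.Multiset.eq_and_eq_of_add_eq_add_of_disjoint {α : Type*} {s t s' t' : Multiset α}
    (hs : Disjoint s s') (ht : Disjoint t t') (h : s + t = s' + t') : s = t' ∧ t = s' := by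
  classical
  have hcount (a : α) : count a s = count a t' ∧ count a t = count a s' := by
    have hsum := congrArg (count a) h
    simp only [Multiset.count_add] at hsum
    have hs0 : count a s = 0 ∨ count a s' = 0 := by
      by_cases ha : a ∈ s
      · exact Or.inr (Multiset.count_eq_zero.2 (Multiset.disjoint_left.1 hs ha))
      · exact Or.inl (Multiset.count_eq_zero.2 ha)
    have ht0 : count a t = 0 ∨ count a t' = 0 := by
      by_cases ha : a ∈ t
      · exact Or.inr (Multiset.count_eq_zero.2 (Multiset.disjoint_left.1 ht ha))
      · exact Or.inl (Multiset.count_eq_zero.2 ha)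
    omega
  exact ⟨Multiset.ext.2 fun a => (hcount a).1, Multiset.ext.2 fun a => (hcount a).2⟩

variable (M) in
def UnbalancedRel (u v : Multiset (Associates M)) : Prop :=
  IsRel M u v ∧ Disjoint u v ∧ card u < card v

theorem LengthFactorial.unbalancedRel_or (hlf : LengthFactorial M)
    {s t : Multiset (Associates M)} (h : IsRel M s t) (hd : Disjoint s t) (hne : s ≠ t) :
    UnbalancedRel M s t ∨ UnbalancedRel M t s := by
  rcases lt_trichotomy (card s) (card t) with hlt | heq | hgt
  · exact Or.inl ⟨h, hd, hlt⟩
  · exact absurd (hlf.eq_of_isRel h heq) hne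
  · exact Or.inr ⟨h.symm, hd.symm, hgt⟩

theorem LengthFactorial.unbalancedRel_sub_or [DecidableEq (Associates M)]
    (hlf : LengthFactorial M) {s t : Multiset (Associates M)} (h : IsRel M s t) (hne : s ≠ t) :
    UnbalancedRel M (s - t) (t - s) ∨ UnbalancedRel M (t - s) (s - t) := by
  have hd : Disjoint (s - t) (t - s) := by
    rw [← Multiset.inter_eq_zero_iff_disjoint]
    ext a
    simp only [Multiset.count_inter, Multiset.count_sub, Multiset.count_zero]
    omega
  refine hlf.unbalancedRel_or h.sub_sub hd fun heq => hne (le_antisymm ?_ ?_)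
  all_goals rw [← tsub_eq_zero_iff_le]; exact disjoint_self.1 (heq ▸ hd)

theorem UnbalancedRel.nsmul_eq (hlf : LengthFactorial M) {u v u' v' : Multiset (Associates M)}
    (h : UnbalancedRel M u v) (h' : UnbalancedRel M u' v') :
    (card v' - card u') • u = (card v - card u) • u' ∧
      (card v - card u) • v' = (card v' - card u') • v := by
  obtain ⟨⟨hu, hv, hp⟩, hd, hc⟩ := h
  obtain ⟨⟨hu', hv', hp'⟩, hd', hc'⟩ := h'
  have nsmul_disjoint {s t : Multiset (Associates M)} (m n : ℕ) (hst : Disjoint s t) :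
      Disjoint (m • s) (n • t) :=
    Multiset.disjoint_left.2 fun hs ht =>
      Multiset.disjoint_left.1 hst (Multiset.mem_of_mem_nsmul hs) (Multiset.mem_of_mem_nsmul ht)
  have atoms {s t : Multiset (Associates M)} (m n : ℕ) (hs : ∀ a ∈ s, Irreducible a)
      (ht : ∀ a ∈ t, Irreducible a) : ∀ a ∈ m • s + n • t, Irreducible a := by
    simp only [Multiset.mem_add]
    rintro a (ha | ha)
    exacts [hs a (Multiset.mem_of_mem_nsmul ha), ht a (Multiset.mem_of_mem_nsmul ha)]
  refine Multiset.eq_and_eq_of_add_eq_add_of_disjoint (nsmul_disjoint _ _ hd)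
    (nsmul_disjoint _ _ hd'.symm) (hlf.eq_of_isRel ⟨atoms _ _ hu hv', atoms _ _ hv hu', ?_⟩ ?_)
  · simp only [Multiset.prod_add, Multiset.prod_nsmul, hp, hp']
  · simp only [Multiset.card_add, Multiset.card_nsmul]
    obtain ⟨g, hg⟩ := Nat.exists_eq_add_of_lt hc
    obtain ⟨g', hg'⟩ := Nat.exists_eq_add_of_lt hc'
    rw [hg, hg']
    simp only [Nat.add_assoc, Nat.add_sub_cancel_left]
    ring

variable (M) in
def IsMinimalUnbalancedRel (u v : Multiset (Associates M)) : Prop :=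
  UnbalancedRel M u v ∧ ∀ u' v', UnbalancedRel M u' v' → card u + card v ≤ card u' + card v'

theorem IsMinimalUnbalancedRel.le_and_le (hlf : LengthFactorial M)
    {u v u' v' : Multiset (Associates M)} (h : IsMinimalUnbalancedRel M u v)
    (h' : UnbalancedRel M u' v') : u ≤ u' ∧ v ≤ v' := by
  classical
  obtain ⟨hu, hv⟩ := h.1.nsmul_eq hlf h'
  obtain ⟨g, hg⟩ := Nat.exists_eq_add_of_lt h.1.2.2
  obtain ⟨g', hg'⟩ := Nat.exists_eq_add_of_lt h'.2.2
  rw [hg, hg', Nat.add_assoc, Nat.add_sub_cancel_left, Nat.add_assoc, Nat.add_sub_cancel_left]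
    at hu hv
  have hcard : (g' + 1) * card u = (g + 1) * card u' := by
    simpa only [Multiset.card_nsmul] using congrArg card hu
  have hmin := h.2 u' v' h'
  rw [hg, hg'] at hmin
  have hle : g ≤ g' := by nlinarith
  constructor <;> refine Multiset.le_iff_count.2 fun a => ?_
  · have hcount := congrArg (count a) hu
    simp only [Multiset.count_nsmul] at hcount
    exact Nat.le_of_mul_le_mul_left (by nlinarith) g'.succ_pos
  · have hcount := congrArg (count a) hv
    simp only [Multiset.count_nsmul] at hcount
    exact Nat.le_of_mul_le_mul_left (by nlinarith) g.succ_pos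

theorem exists_unbalancedRel (hat : Atomic M) (hlf : LengthFactorial M) (hnf : ¬ Factorial M) :
    ∃ u v, UnbalancedRel M u v := by
  classical
  obtain ⟨x, hx⟩ := not_forall.1 hnf
  obtain ⟨s, hs⟩ := hat.factorsOf_nonempty x
  obtain ⟨t, ht, hne⟩ : ∃ t ∈ FactorsOf M x, t ≠ s := by
    by_contra! hall
    exact hx ⟨s, hs, hall⟩
  have hrel : IsRel M s t := ⟨hs.1, ht.1, hs.2.trans ht.2.symm⟩
  rcases hlf.unbalancedRel_sub_or hrel hne.symm with h | h
  exacts [⟨_, _, h⟩, ⟨_, _, h⟩]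

theorem exists_isMinimalUnbalancedRel (hat : Atomic M) (hlf : LengthFactorial M)
    (hnf : ¬ Factorial M) : ∃ u v, IsMinimalUnbalancedRel M u v := by
  obtain ⟨u, v, h⟩ := exists_unbalancedRel hat hlf hnf
  let size (p : Multiset (Associates M) × Multiset (Associates M)) : ℕ := card p.1 + card p.2
  obtain ⟨⟨u, v⟩, hmem, hmin⟩ :=
    (measure size).wf.has_min {p | UnbalancedRel M p.1 p.2} ⟨(u, v), h⟩
  exact ⟨u, v, hmem, fun u' v' h' => not_lt.1 (hmin (u', v') h')⟩

theorem IsMinimalUnbalancedRel.eq_or_eq (hlf : LengthFactorial M)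
    {u v w : Multiset (Associates M)} (h : IsMinimalUnbalancedRel M u v)
    (hw : IsFactorizationOf M w u.prod) : w = u ∨ w = v := by
  classical
  by_contra! hne
  have hv0 : v ≠ 0 := by
    rintro rfl
    exact absurd h.1.2.2 (Nat.not_lt_zero _)
  obtain ⟨a, ha⟩ := Multiset.exists_mem_of_ne_zero hv0
  have hrel : IsRel M w u := ⟨hw.1, h.1.1.1, hw.2⟩
  rcases hlf.unbalancedRel_sub_or hrel hne.1 with hwu | huw
  · have hvu : v ≤ u := (h.le_and_le hlf hwu).2.trans tsub_le_self
    exact Multiset.disjoint_left.1 h.1.2.1 (Multiset.mem_of_le hvu ha) ha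
  · have hvw : v ≤ w := (h.le_and_le hlf huw).2.trans tsub_le_self
    exact hne.2 (eq_of_le_of_prod_eq hw.1 hvw (h.1.1.2.2.symm.trans hw.2.symm)).symm

section GcdChainRel

variable {b : Associates M} {z z' : Multiset (Associates M)}

theorem GcdChainRel.refl (hz : IsFactorizationOf M z b) : GcdChainRel M b z z :=
  ⟨[z], rfl, rfl, by simpa using hz, List.isChain_singleton _⟩

theorem GcdChainRel.of_mem_of_mem {a : Associates M} (hz : IsFactorizationOf M z b)
    (hz' : IsFactorizationOf M z' b) (ha : a ∈ z) (ha' : a ∈ z') : GcdChainRel M b z z' :=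
  ⟨[z, z'], rfl, rfl, by simp [hz, hz'], List.isChain_pair.2 ⟨a, ha, ha'⟩⟩

theorem GcdChainRel.symm (h : GcdChainRel M b z z') : GcdChainRel M b z' z := by
  obtain ⟨L, hh, hl, hf, hch⟩ := h
  refine ⟨L.reverse, by rwa [List.head?_reverse], by rwa [List.getLast?_reverse],
    fun w hw => hf w (List.mem_reverse.1 hw), ?_⟩
  exact List.isChain_reverse.2 (hch.imp fun _ _ ⟨a, ha, ha'⟩ => ⟨a, ha', ha⟩)

theorem GcdChainRel.induction {P : Multiset (Associates M) → Prop}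
    (step : ∀ w w', IsFactorizationOf M w b → IsFactorizationOf M w' b →
      (∃ a, a ∈ w ∧ a ∈ w') → P w → P w')
    (h : GcdChainRel M b z z') (hz : P z) : P z' := by
  obtain ⟨L, hh, hl, hf, hch⟩ := h
  refine List.IsChain.induction P L (List.IsChain.iff_mem.1 hch) ?_ ?_ z' (List.mem_of_getLast? hl)
  · rintro w w' ⟨hw, hw', hshare⟩
    exact step w w' (hf w hw) (hf w' hw') hshare
  · intro hL
    rwa [Option.some.inj ((List.head?_eq_some_head hL).symm.trans hh)]

end GcdChainRel

theorem IsMinimalUnbalancedRel.isBetti_prod (hlf : LengthFactorial M)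
    {u v : Multiset (Associates M)} (h : IsMinimalUnbalancedRel M u v) : IsBetti M u.prod := by
  refine ⟨u, v, ⟨h.1.1.1, rfl⟩, ⟨h.1.1.2.1, h.1.1.2.2.symm⟩, fun hc => ?_⟩
  have hvu : v = u := by
    refine hc.induction (P := (· = u)) ?_ rfl
    rintro w w' - hw' ⟨a, ha, ha'⟩ rfl
    refine (h.eq_or_eq hlf hw').resolve_right ?_
    rintro rfl
    exact Multiset.disjoint_left.1 h.1.2.1 ha ha'
  exact absurd (hvu ▸ h.1.2.2) (lt_irrefl _)

theorem IsMinimalUnbalancedRel.eq_of_not_gcdChainRel (hlf : LengthFactorial M)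
    {u v z z' : Multiset (Associates M)} {b : Associates M} (h : IsMinimalUnbalancedRel M u v)
    (hr : UnbalancedRel M z z') (hz : IsFactorizationOf M z b) (hz' : IsFactorizationOf M z' b)
    (hnc : ¬ GcdChainRel M b z z') : z = u := by
  obtain ⟨huz, hvz'⟩ := h.le_and_le hlf hr
  obtain ⟨e, rfl⟩ := Multiset.le_iff_exists_add.1 huz
  by_contra hne
  obtain ⟨a, ha⟩ := Multiset.exists_mem_of_ne_zero fun he : e = 0 => hne (by rw [he, add_zero])
  obtain ⟨c, hc⟩ := Multiset.exists_mem_of_ne_zero fun hv : v = 0 =>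
    absurd h.1.2.2 (by rw [hv]; exact Nat.not_lt_zero _)
  have hw : IsFactorizationOf M (v + e) b := by
    refine ⟨fun x hx => ?_, ?_⟩
    · rcases Multiset.mem_add.1 hx with hx | hx
      exacts [h.1.1.2.1 x hx, hz.1 x (Multiset.mem_add.2 (Or.inr hx))]
    · rw [← hz.2, Multiset.prod_add, Multiset.prod_add, h.1.1.2.2]
  refine hnc ⟨[u + e, v + e, z'], rfl, rfl, by simp [hz, hw, hz'], ?_⟩
  exact List.IsChain.cons_cons
    ⟨a, Multiset.mem_add.2 (Or.inr ha), Multiset.mem_add.2 (Or.inr ha)⟩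
    (List.isChain_pair.2 ⟨c, Multiset.mem_add.2 (Or.inl hc), Multiset.mem_of_le hvz' hc⟩)

theorem IsMinimalUnbalancedRel.eq_prod_of_isBetti (hlf : LengthFactorial M)
    {u v : Multiset (Associates M)} {b : Associates M} (h : IsMinimalUnbalancedRel M u v)
    (hb : IsBetti M b) : b = u.prod := by
  obtain ⟨z, z', hz, hz', hnc⟩ := hb
  have hne : z ≠ z' := by
    rintro rfl
    exact hnc (.refl hz)
  have hd : Disjoint z z' :=
    Multiset.disjoint_left.2 fun ha ha' => hnc (.of_mem_of_mem hz hz' ha ha')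
  rcases hlf.unbalancedRel_or ⟨hz.1, hz'.1, hz.2.trans hz'.2.symm⟩ hd hne with hr | hr
  · rw [← hz.2, h.eq_of_not_gcdChainRel hlf hr hz hz' hnc]
  · rw [← hz'.2, h.eq_of_not_gcdChainRel hlf hr hz' hz fun hc => hnc hc.symm]

/-- A proper length-factorial monoid has exactly one Betti element in its
reduced monoid. -/
theorem stmt4 (hat : Atomic M) (hlf : LengthFactorial M) (hnf : ¬ Factorial M) :
    ∃! b : Associates M, IsBetti M b := by
  obtain ⟨u, v, h⟩ := exists_isMinimalUnbalancedRel hat hlf hnf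
  exact ⟨u.prod, h.isBetti_prod hlf, fun b hb => h.eq_prod_of_isBetti hlf hb⟩

end LF
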